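/- Let R be a commutative ring and M a finitely generated projective R-module. If for every ring homomorphism from R to a field k the k-vector space M ⊗_R k has dimension 1, then M is an invertible R-module: the evaluation map M ⊗_R Hom_R(M, R) → R is an isomorphism. -/

import Mathlib

/-!
A surjection between finite flat modules whose ranks agree at every maximal ideal is bijective
(it is a surjection between free modules of equal rank after localizing). The rank of `M` at a
prime is the dimension of its fibre, hence `1`; since `Hom` out of a finitely presented module
commutes with flat base change, `Mᵛ` and therefore `M ⊗ Mᵛ` have rank `1` as well.
The image of `M ⊗ Mᵛ → R` is the trace ideal `I` of `M`, and a dual basis shows `I • M = M`;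
if `I` lay in a maximal ideal `P`, the fibre `M ⧸ P • M` would vanish.
-/

open TensorProduct

universe u v

namespace Module

section

variable {R M : Type*} [CommRing R] [AddCommGroup M] [Module R M]

attribute [local instance] free_of_flat_of_isLocalRing in
theorem rankAtStalk_linearMap (N : Type*) [AddCommGroup N] [Module R N] [FinitePresentation R M]
    [Flat R M] [Module.Finite R N] [Flat R N] :
    rankAtStalk (M →ₗ[R] N) = rankAtStalk M * rankAtStalk (R := R) N := by
  ext p
  let Rₚ := Localization.AtPrime p.asIdeal
  rw [Pi.mul_apply, rankAtStalk_eq_finrank_tensorProduct, rankAtStalk_eq_finrank_tensorProduct,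
    rankAtStalk_eq_finrank_tensorProduct,
    (FinitePresentation.isBaseChange_map R M N Rₚ).equiv.finrank_eq, finrank_linearMap]

variable [Projective R M]

theorem range_contractRight_smul_top :
    LinearMap.range (contractRight R M) • (⊤ : Submodule R M) = ⊤ := by
  obtain ⟨s, hs⟩ := Projective.out (R := R) (P := M)
  refine Submodule.eq_top_iff'.mpr fun m ↦ ?_
  rw [← hs m, Finsupp.linearCombination_apply]
  refine Submodule.sum_mem _ fun x _ ↦ Submodule.smul_mem_smul ?_ Submodule.mem_top
  exact ⟨m ⊗ₜ (Finsupp.lapply x ∘ₗ s), by simp⟩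

theorem contractRight_surjective_of_forall_nontrivial
    (h : ∀ P : Ideal R, P.IsMaximal → Nontrivial ((R ⧸ P) ⊗[R] M)) :
    Function.Surjective (contractRight R M) := by
  rw [← LinearMap.range_eq_top]
  by_contra hne
  obtain ⟨P, hP, hle⟩ := Ideal.exists_le_maximal _ hne
  have hPM : P • (⊤ : Submodule R M) = ⊤ := top_unique <|
    calc ⊤ = LinearMap.range (contractRight R M) • (⊤ : Submodule R M) :=
          range_contractRight_smul_top.symm
      _ ≤ P • ⊤ := Submodule.smul_mono_left hle
  have := h P hP
  have : Subsingleton (M ⧸ P • (⊤ : Submodule R M)) := by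
    rw [hPM]
    infer_instance
  exact not_subsingleton _ (quotTensorEquivQuotSMul M P).toEquiv.subsingleton

end

end Module

theorem line_bundle_invertible {R : Type u} {M : Type v} [CommRing R]
    [AddCommGroup M] [Module R M] [Module.Finite R M] [Module.Projective R M]
    (h : ∀ (k : Type u) [Field k] [Algebra R k], Module.finrank k (k ⊗[R] M) = 1) :
    Function.Bijective (contractRight R M) := by
  have : Module.FinitePresentation R M := Module.finitePresentation_of_projective R M
  have hrank (p : PrimeSpectrum R) : Module.rankAtStalk M p = 1 :=
    (Module.rankAtStalk_eq p).trans (h _)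
  have hsurj := Module.contractRight_surjective_of_forall_nontrivial (R := R) (M := M) fun P _ ↦ by
    let := Ideal.Quotient.field P
    exact Module.nontrivial_of_finrank_eq_succ (h (R ⧸ P))
  refine Module.bijective_of_surjective_of_rankAtStalk_eq hsurj fun P _ ↦ ?_
  have : Nontrivial R := (Ideal.Quotient.mk P).domain_nontrivial
  rw [Module.rankAtStalk_tensorProduct, Module.rankAtStalk_linearMap, Module.rankAtStalk_self]
  simp [hrank]
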